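/- Let b₁,…,bₙ be i.i.d. Bernoulli random variables with parameter u ∈ (0,1]. Then for any δ ∈ (0,1), P(Σ_{i=1}^n b_i ≥ 2 + e²·u·n + 2 log(1/δ) | Σ_{i=1}^n b_i ≥ 1) ≤ δ. -/

import Mathlib

/-!
STATEMENT 17: For i.i.d. Bernoulli(u) random variables b₁,…,bₙ and any δ ∈ (0,1),
P(Σ bᵢ ≥ 2 + e²·u·n + 2 log(1/δ) | Σ bᵢ ≥ 1) ≤ δ.
-/

open MeasureTheory ProbabilityTheory

private lemma tail_aux_exp_half {x : ℝ} (hx : 0 < x) (hx1 : x ≤ 1) :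
    Real.exp (-x) ≤ 1 - x / 2 := by
  have hprod : Real.exp (-x) * Real.exp x = 1 := by
    rw [← Real.exp_add]; simp
  have he1 : x + 1 ≤ Real.exp x := Real.add_one_le_exp x
  have he2 : 0 < Real.exp (-x) := Real.exp_pos _
  nlinarith [mul_nonneg hx.le (by linarith : (0:ℝ) ≤ 1 - x)]

private lemma tail_aux_amgm {x s : ℝ} (hx : 0 < x) (hs : 0 < s) (hs2 : x * s ^ 2 = 2) :
    Real.exp 1 * x * s ≤ Real.exp 2 * x + 1 / 2 := by
  have he2 : Real.exp 2 = Real.exp 1 * Real.exp 1 := by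
    rw [← Real.exp_add]; norm_num
  have hA2 : (Real.exp 1 * x * s) ^ 2 = 2 * (Real.exp 1 * Real.exp 1) * x := by
    calc (Real.exp 1 * x * s) ^ 2 = Real.exp 1 * Real.exp 1 * x * (x * s ^ 2) := by ring
      _ = 2 * (Real.exp 1 * Real.exp 1) * x := by rw [hs2]; ring
  nlinarith [sq_nonneg (Real.exp 1 * x * s - 1)]

private lemma tail_aux_small {x s δ : ℝ} (hx : 0 < x) (hs1 : 1 ≤ s) (hs2 : x * s ^ 2 = 2)
    (hδ0 : 0 < δ) (hδ1 : δ < 1) :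
    -(1 + Real.log s) * (2 + Real.exp 2 * x + 2 * Real.log (1 / δ))
        + x * (Real.exp 1 * s - 1)
      ≤ Real.log δ - 2 * Real.log s := by
  have hg : 0 ≤ Real.log s := Real.log_nonneg hs1
  have hLD : Real.log (1 / δ) = -Real.log δ := by rw [one_div, Real.log_inv]
  have hD : Real.log δ < 0 := Real.log_neg hδ0 hδ1
  have hxs := tail_aux_amgm hx (lt_of_lt_of_le one_pos hs1) hs2
  have hE2 : (0:ℝ) < Real.exp 2 := Real.exp_pos 2
  have h1 : 0 ≤ Real.log s * (Real.exp 2 * x) := by positivity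
  have h2 : 0 ≤ Real.log s * (-Real.log δ) := mul_nonneg hg (by linarith)
  rw [hLD]
  nlinarith

private lemma tail_aux_large {x δ : ℝ} (hx1 : 1 ≤ x) (hδ0 : 0 < δ) (hδ1 : δ < 1) :
    -2 * (2 + Real.exp 2 * x + 2 * Real.log (1 / δ)) + x * (Real.exp 2 - 1)
      ≤ -4 + Real.log δ := by
  have hLD : Real.log (1 / δ) = -Real.log δ := by rw [one_div, Real.log_inv]
  have hD : Real.log δ < 0 := Real.log_neg hδ0 hδ1
  have hE2 : (0:ℝ) < Real.exp 2 := Real.exp_pos 2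
  have h1 : 0 ≤ x * (Real.exp 2 + 1) := by positivity
  rw [hLD]
  nlinarith

private lemma tail_aux_num : Real.exp (-4) ≤ 1 - Real.exp (-1) := by
  have h2 : (2:ℝ) ≤ Real.exp 1 := by linarith [Real.add_one_le_exp 1]
  have hi : Real.exp (-1) ≤ 1 / 2 := by
    rw [Real.exp_neg]
    rw [inv_le_comm₀ (Real.exp_pos 1) (by norm_num)]
    linarith
  have h44 : Real.exp (-4) = Real.exp (-1) ^ 4 := by
    rw [← Real.exp_nat_mul]; norm_num
  have h4 : Real.exp (-1) ^ 4 ≤ (1/2:ℝ) ^ 4 := pow_le_pow_left₀ (Real.exp_pos _).le hi 4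
  rw [h44]
  norm_num at h4 ⊢
  linarith


theorem bernoulli_conditional_tail
    (Ω : Type*) [MeasurableSpace Ω] (P : Measure Ω) (hP : IsProbabilityMeasure P)
    (n : ℕ) (u : ℝ) (hu : u ∈ Set.Ioc (0 : ℝ) 1)
    (b : Fin n → Ω → ℝ)
    (hmeas : ∀ i, Measurable (b i))
    (hindep : iIndepFun b P)
    (hvals : ∀ i ω, b i ω = 0 ∨ b i ω = 1)
    (hbern : ∀ i, P {ω | b i ω = 1} = ENNReal.ofReal u)
    (δ : ℝ) (hδ : δ ∈ Set.Ioo (0 : ℝ) 1) :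
    (P[|{ω | 1 ≤ ∑ i, b i ω}])
        {ω | 2 + Real.exp 2 * u * n + 2 * Real.log (1 / δ) ≤ ∑ i, b i ω}
      ≤ ENNReal.ofReal δ := by
  obtain ⟨hu0, hu1⟩ := hu
  obtain ⟨hδ0, hδ1⟩ := hδ
  have hSmeas : Measurable fun ω => ∑ i, b i ω :=
    Finset.measurable_sum _ fun i _ => hmeas i
  have hA : MeasurableSet {ω | (1:ℝ) ≤ ∑ i, b i ω} :=
    measurableSet_le measurable_const hSmeas
  rw [ProbabilityTheory.cond_apply hA]
  set t : ℝ := 2 + Real.exp 2 * u * n + 2 * Real.log (1 / δ) with ht_def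
  rcases Nat.eq_zero_or_pos n with hn | hn
  · have hempty : ({ω | (1:ℝ) ≤ ∑ i, b i ω} : Set Ω) = ∅ := by
      ext ω
      subst hn
      simp
    rw [hempty]
    simp
  -- abbreviations
  set x : ℝ := u * n with hx_def
  have hx : 0 < x := by
    have : (1:ℝ) ≤ (n:ℝ) := by exact_mod_cast hn
    positivity
  have hL : 0 < Real.log (1/δ) := Real.log_pos (by rw [lt_div_iff₀ hδ0]; linarith)
  have hD : Real.log δ < 0 := Real.log_neg hδ0 hδ1
  have hLD : Real.log (1/δ) = - Real.log δ := by rw [one_div, Real.log_inv]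
  have ht1 : (1:ℝ) ≤ t := by
    have h1 : 0 ≤ Real.exp 2 * u * n := by positivity
    simp only [ht_def]; linarith
  have hBA : {ω | t ≤ ∑ i, b i ω} ⊆ {ω | (1:ℝ) ≤ ∑ i, b i ω} :=
    fun ω hω => le_trans ht1 hω
  rw [Set.inter_eq_self_of_subset_right hBA]
  -- Bernoulli basics
  have hnn : ∀ i ω, 0 ≤ b i ω := fun i ω => by rcases hvals i ω with h | h <;> simp [h]
  have hle1 : ∀ i ω, b i ω ≤ 1 := fun i ω => by rcases hvals i ω with h | h <;> simp [h]
  have hu1' : 0 ≤ 1 - u := by linarith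
  have hintb : ∀ i, Integrable (b i) P := by
    intro i
    refine Integrable.mono' (integrable_const 1) (hmeas i).aestronglyMeasurable
      (Filter.Eventually.of_forall fun ω => ?_)
    rw [Real.norm_eq_abs, abs_of_nonneg (hnn i ω)]
    exact hle1 i ω
  have hibi : ∀ i, ∫ ω, b i ω ∂P = u := by
    intro i
    have hseq : ∀ ω, b i ω = Set.indicator {ω | b i ω = 1} (fun _ => (1:ℝ)) ω := by
      intro ω
      rcases hvals i ω with h | h
      · rw [h, Set.indicator_of_notMem]
        simp only [Set.mem_setOf_eq, h]
        norm_num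
      · rw [h, Set.indicator_of_mem]
        exact h
    have hms : MeasurableSet {ω | b i ω = 1} := (hmeas i) (measurableSet_singleton 1)
    rw [integral_congr_ae (Filter.Eventually.of_forall hseq),
      MeasureTheory.integral_indicator_const (1:ℝ) hms, measureReal_def, hbern i, smul_eq_mul, mul_one,
      ENNReal.toReal_ofReal hu0.le]
  have hmgf1 : ∀ (i : Fin n) (l : ℝ), mgf (b i) P l = 1 + (Real.exp l - 1) * u := by
    intro i l
    have hpt : ∀ ω, Real.exp (l * b i ω) = 1 + (Real.exp l - 1) * b i ω := by
      intro ω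
      rcases hvals i ω with h | h <;> simp [h] <;> ring
    unfold mgf
    rw [integral_congr_ae (Filter.Eventually.of_forall hpt),
      integral_add (integrable_const 1) ((hintb i).const_mul _),
      integral_const, integral_const_mul, hibi i]
    simp
  -- Chernoff bound
  have chern : ∀ l : ℝ, 0 ≤ l →
      (P {ω | t ≤ ∑ i, b i ω}).toReal ≤ Real.exp (-l * t + x * (Real.exp l - 1)) := by
    intro l hl
    have hSle : ∀ ω, (∑ i, b i ω) ≤ (n:ℝ) := by
      intro ω
      calc ∑ i, b i ω ≤ ∑ _i : Fin n, (1:ℝ) := Finset.sum_le_sum fun i _ => hle1 i ω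
        _ = n := by simp
    have hint : Integrable (fun ω => Real.exp (l * (∑ i, b i) ω)) P := by
      refine Integrable.mono' (integrable_const (Real.exp (l * n)))
        ((hSmeas.const_mul l).exp.aestronglyMeasurable.congr ?_)
        (Filter.Eventually.of_forall fun ω => ?_)
      · filter_upwards with ω
        simp [Finset.sum_apply]
      · rw [Real.norm_eq_abs, Real.abs_exp, Real.exp_le_exp, Finset.sum_apply]
        exact mul_le_mul_of_nonneg_left (hSle ω) hl
    have hch := measure_ge_le_exp_mul_mgf (μ := P) (X := ∑ i, b i) (t := l) t hl hint
    have hset : {ω | t ≤ (∑ i, b i) ω} = {ω | t ≤ ∑ i, b i ω} := by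
      ext ω; simp [Finset.sum_apply]
    rw [hset] at hch
    refine hch.trans ?_
    rw [hindep.mgf_sum hmeas Finset.univ]
    have h0 : (0:ℝ) ≤ 1 + (Real.exp l - 1) * u := by
      have : 1 ≤ Real.exp l := Real.one_le_exp hl
      nlinarith
    calc Real.exp (-l * t) * ∏ i, mgf (b i) P l
        = Real.exp (-l * t) * (1 + (Real.exp l - 1) * u)^n := by
          simp [hmgf1]
      _ ≤ Real.exp (-l * t) * (Real.exp ((Real.exp l - 1) * u))^n := by
          have h1 : 1 + (Real.exp l - 1) * u ≤ Real.exp ((Real.exp l - 1) * u) := by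
            linarith [Real.add_one_le_exp ((Real.exp l - 1) * u)]
          exact mul_le_mul_of_nonneg_left (pow_le_pow_left₀ h0 h1 n) (Real.exp_pos _).le
      _ = Real.exp (-l * t + x * (Real.exp l - 1)) := by
          rw [← Real.exp_nat_mul, ← Real.exp_add]
          congr 1
          simp only [hx_def]; ring
  -- P(A) = 1 - (1-u)^n
  have hcomp : {ω | (1:ℝ) ≤ ∑ i, b i ω}ᶜ = ⋂ i, (b i)⁻¹' {0} := by
    ext ω
    simp only [Set.mem_compl_iff, Set.mem_setOf_eq, not_le, Set.mem_iInter, Set.mem_preimage,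
      Set.mem_singleton_iff]
    constructor
    · intro h i
      by_contra hne
      have h1 : b i ω = 1 := (hvals i ω).resolve_left hne
      have h2 : b i ω ≤ ∑ j, b j ω :=
        Finset.single_le_sum (fun j _ => hnn j ω) (Finset.mem_univ i)
      rw [h1] at h2
      linarith
    · intro h
      have : ∑ j, b j ω = 0 := Finset.sum_eq_zero fun j _ => h j
      rw [this]
      norm_num
  have hPC : P (⋂ i, (b i)⁻¹' {0}) = ENNReal.ofReal ((1-u)^n) := by
    rw [hindep.meas_iInter fun i => ⟨{0}, measurableSet_singleton 0, rfl⟩]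
    have hone : ∀ i : Fin n, P ((b i)⁻¹' {0}) = ENNReal.ofReal (1-u) := by
      intro i
      have hce : (b i)⁻¹' {0} = ((b i)⁻¹' {1})ᶜ := by
        ext ω
        simp only [Set.mem_preimage, Set.mem_singleton_iff, Set.mem_compl_iff]
        constructor
        · intro h; rw [h]; norm_num
        · intro h; exact (hvals i ω).resolve_right h
      have hb1 : P ((b i)⁻¹' {1}) = ENNReal.ofReal u := hbern i
      rw [hce, prob_compl_eq_one_sub ((hmeas i) (measurableSet_singleton 1)), hb1,
        ENNReal.ofReal_sub 1 hu0.le, ENNReal.ofReal_one]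
    rw [Finset.prod_congr rfl fun i _ => hone i, Finset.prod_const,
      ← ENNReal.ofReal_pow hu1']
    simp
  have hPA_eq : P {ω | (1:ℝ) ≤ ∑ i, b i ω} = ENNReal.ofReal (1 - (1-u)^n) := by
    have hAC : {ω | (1:ℝ) ≤ ∑ i, b i ω} = (⋂ i, (b i)⁻¹' {0})ᶜ := by
      rw [← hcomp, compl_compl]
    have hCmeas : MeasurableSet (⋂ i, (b i)⁻¹' {0}) :=
      MeasurableSet.iInter fun i => (hmeas i) (measurableSet_singleton 0)
    rw [hAC, prob_compl_eq_one_sub hCmeas, hPC,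
      ENNReal.ofReal_sub 1 (pow_nonneg hu1' n), ENNReal.ofReal_one]
  have hpow_lt : (1-u)^n < 1 := pow_lt_one₀ hu1' (by linarith) hn.ne'
  have hPA_ne : P {ω | (1:ℝ) ≤ ∑ i, b i ω} ≠ 0 := by
    rw [hPA_eq]
    simp only [ne_eq, ENNReal.ofReal_eq_zero, not_le]
    linarith
  -- lower bound on 1 - (1-u)^n
  have hpow_exp : (1-u)^n ≤ Real.exp (-x) := by
    have h1 : 1 - u ≤ Real.exp (-u) := by linarith [Real.add_one_le_exp (-u)]
    calc (1-u)^n ≤ (Real.exp (-u))^n := pow_le_pow_left₀ hu1' h1 n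
      _ = Real.exp (-x) := by rw [← Real.exp_nat_mul]; congr 1; simp only [hx_def]; ring
  -- main real inequality
  have key : (P {ω | t ≤ ∑ i, b i ω}).toReal ≤ δ * (1 - (1-u)^n) := by
    rcases le_or_gt x 1 with hx1 | hx1
    · -- small x case
      set s : ℝ := Real.sqrt (2/x) with hs_def
      have hs_pos : 0 < s := Real.sqrt_pos.mpr (by positivity)
      have hs2 : x * s^2 = 2 := by
        rw [hs_def, Real.sq_sqrt (by positivity)]
        field_simp
      have hs1 : 1 ≤ s := by
        rw [hs_def, show (1:ℝ) = Real.sqrt 1 by simp]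
        apply Real.sqrt_le_sqrt
        rw [le_div_iff₀ hx]
        linarith
      have hg : 0 ≤ Real.log s := Real.log_nonneg hs1
      set l : ℝ := 1 + Real.log s with hl_def
      have hl0 : 0 ≤ l := by simp only [hl_def]; linarith
      have hel : Real.exp l = Real.exp 1 * s := by
        rw [hl_def, Real.exp_add, Real.exp_log hs_pos]
      -- lower bound P(A) part: 1 - (1-u)^n ≥ x/2
      have hPAlb : x/2 ≤ 1 - (1-u)^n := by
        linarith [hpow_exp, tail_aux_exp_half hx hx1]
      -- Chernoff exponent bound
      have hkey2 : Real.exp (-l * t + x * (Real.exp l - 1)) ≤ δ * (x/2) := by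
        have hrhs : δ * (x/2) = Real.exp (Real.log δ - 2 * Real.log s) := by
          rw [Real.exp_sub, Real.exp_log hδ0]
          congr 1
          have hes : Real.exp (2 * Real.log s) = s^2 := by
            rw [show (2:ℝ) * Real.log s = Real.log (s^2) by rw [Real.log_pow]; norm_num,
              Real.exp_log (by positivity)]
          rw [hes]
          field_simp
          linarith [hs2]
        rw [hrhs, Real.exp_le_exp, hel]
        have hteq : t = 2 + Real.exp 2 * x + 2 * Real.log (1/δ) := by
          rw [ht_def, hx_def]; ring
        rw [hteq, hl_def]
        linarith [tail_aux_small hx hs1 hs2 hδ0 hδ1]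
      calc (P {ω | t ≤ ∑ i, b i ω}).toReal
          ≤ Real.exp (-l * t + x * (Real.exp l - 1)) := chern l hl0
        _ ≤ δ * (x/2) := hkey2
        _ ≤ δ * (1 - (1-u)^n) := by
            apply mul_le_mul_of_nonneg_left hPAlb hδ0.le
    · -- large x case, l = 2
      have hPAlb : 1 - Real.exp (-1) ≤ 1 - (1-u)^n := by
        have : Real.exp (-x) ≤ Real.exp (-1) := Real.exp_le_exp.mpr (by linarith)
        linarith [hpow_exp]
      have hnum : Real.exp (-4) ≤ 1 - Real.exp (-1) := tail_aux_num
      have hkey2 : Real.exp (-2 * t + x * (Real.exp 2 - 1)) ≤ δ * (1 - Real.exp (-1)) := by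
        have hstep : Real.exp (-2 * t + x * (Real.exp 2 - 1)) ≤ Real.exp (-4) * δ := by
          rw [show Real.exp (-4) * δ = Real.exp (-4 + Real.log δ) by
            rw [Real.exp_add, Real.exp_log hδ0]]
          rw [Real.exp_le_exp]
          have hteq : t = 2 + Real.exp 2 * x + 2 * Real.log (1/δ) := by
            rw [ht_def, hx_def]; ring
          rw [hteq]
          linarith [tail_aux_large hx1.le hδ0 hδ1]
        calc Real.exp (-2 * t + x * (Real.exp 2 - 1)) ≤ Real.exp (-4) * δ := hstep
          _ ≤ (1 - Real.exp (-1)) * δ := mul_le_mul_of_nonneg_right hnum hδ0.le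
          _ = δ * (1 - Real.exp (-1)) := by ring
      calc (P {ω | t ≤ ∑ i, b i ω}).toReal
          ≤ Real.exp (-2 * t + x * (Real.exp 2 - 1)) := chern 2 (by norm_num)
        _ ≤ δ * (1 - Real.exp (-1)) := hkey2
        _ ≤ δ * (1 - (1-u)^n) := mul_le_mul_of_nonneg_left hPAlb hδ0.le
  -- conclude in ENNReal
  have hPB : P {ω | t ≤ ∑ i, b i ω}
      ≤ ENNReal.ofReal δ * P {ω | (1:ℝ) ≤ ∑ i, b i ω} := by
    rw [hPA_eq, ← ENNReal.ofReal_mul hδ0.le]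
    calc P {ω | t ≤ ∑ i, b i ω}
        = ENNReal.ofReal ((P {ω | t ≤ ∑ i, b i ω}).toReal) :=
          (ENNReal.ofReal_toReal (measure_ne_top P _)).symm
      _ ≤ ENNReal.ofReal (δ * (1 - (1-u)^n)) := ENNReal.ofReal_le_ofReal key
  calc (P {ω | (1:ℝ) ≤ ∑ i, b i ω})⁻¹ * P {ω | t ≤ ∑ i, b i ω}
      ≤ (P {ω | (1:ℝ) ≤ ∑ i, b i ω})⁻¹
          * (ENNReal.ofReal δ * P {ω | (1:ℝ) ≤ ∑ i, b i ω}) :=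
        mul_le_mul_right hPB _
    _ = ENNReal.ofReal δ * ((P {ω | (1:ℝ) ≤ ∑ i, b i ω})⁻¹
          * P {ω | (1:ℝ) ≤ ∑ i, b i ω}) := by ring
    _ = ENNReal.ofReal δ := by
        rw [ENNReal.inv_mul_cancel hPA_ne (measure_ne_top P _), mul_one]
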